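/- Let α, ν ≥ 0 be reals, let B ⊆ S with |B| ≤ νn, and let t = n_{C_i} for some cluster C_i. If x and y are both good points of C_i, then |N_t(x) ∩ N_t(y)| ≥ t − 2(α+ν)n; that is, at threshold t = n_{C_i}, any two good points of C_i share at least t − 2(α+ν)n points among their t nearest neighbors. -/
import Mathlib


open Finset

/-- The `t` nearest neighbors of `x` in the whole point set:
all points whose rank (w.r.t. decreasing similarity to `x`) is below `t`. -/
def nearest {V : Type*} [Fintype V] [DecidableEq V] (r : V → V → ℕ) (x : V) (t : ℕ) :
    Finset V :=
  Finset.univ.filter fun y => r x y < t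

/-- The `s` nearest neighbors of `x` within a subset `T`:
the elements `y ∈ T` such that at most `s` elements of `T` have rank at most that of `y`. -/
def nearestIn {V : Type*} [Fintype V] [DecidableEq V] (r : V → V → ℕ) (x : V)
    (T : Finset V) (s : ℕ) : Finset V :=
  T.filter fun y => (T.filter fun z => r x z ≤ r x y).card ≤ s


/-- In the weak good neighborhood setting, `x` is a good point of the cluster `Ci`
(w.r.t. the bad set `B`): `x ∈ Ci \ B` and at most `α·n` of its `|Ci \ B|` nearest
neighbors within `S \ B` lie outside `Ci \ B`. -/
def IsGoodPoint {V : Type*} [Fintype V] [DecidableEq V] (r : V → V → ℕ)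
    (α : ℝ) (B Ci : Finset V) (x : V) : Prop :=
  x ∈ Ci \ B ∧
    (((nearestIn r x (Finset.univ \ B) ((Ci \ B).card)) \ (Ci \ B)).card : ℝ)
      ≤ α * (Fintype.card V)

section Aux
variable {V : Type*} [Fintype V] [DecidableEq V] (r : V → V → ℕ)

lemma image_rank_eq (hrinj : ∀ x : V, Function.Injective (r x))
    (hrlt : ∀ x y : V, r x y < Fintype.card V) (x : V) :
    Finset.univ.image (r x) = Finset.range (Fintype.card V) := by
  apply Finset.eq_of_subset_of_card_le
  · intro j hj
    simp only [Finset.mem_image, Finset.mem_univ, true_and] at hj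
    obtain ⟨z, hz⟩ := hj
    simpa [Finset.mem_range, ← hz] using hrlt x z
  · rw [Finset.card_range, Finset.card_image_of_injective _ (hrinj x), Finset.card_univ]

lemma card_nearest (hrinj : ∀ x : V, Function.Injective (r x))
    (hrlt : ∀ x y : V, r x y < Fintype.card V) (x : V) (s : ℕ) :
    (nearest r x s).card = min s (Fintype.card V) := by
  have h1 : (nearest r x s).card = ((nearest r x s).image (r x)).card :=
    (Finset.card_image_of_injective _ (hrinj x)).symm
  have h2 : (nearest r x s).image (r x) = (Finset.univ.image (r x)).filter (· < s) := by
    ext j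
    simp only [nearest, nearestIn, Finset.mem_image, Finset.mem_filter, Finset.mem_univ, true_and]
    aesop
  rw [h1, h2, image_rank_eq r hrinj hrlt x]
  have : (Finset.range (Fintype.card V)).filter (· < s) = Finset.range (min s (Fintype.card V)) := by
    ext j; simp only [Finset.mem_filter, Finset.mem_range]; omega
  rw [this, Finset.card_range]

lemma rank_eq_card (hrinj : ∀ x : V, Function.Injective (r x))
    (hrlt : ∀ x y : V, r x y < Fintype.card V) (x z : V) :
    r x z = (Finset.univ.filter fun w => r x w < r x z).card := by
  have := card_nearest r hrinj hrlt x (r x z)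
  rw [min_eq_left (hrlt x z).le] at this
  exact this.symm

-- injectivity of the "rank within T" function
lemma rankIn_injOn (hrinj : ∀ x : V, Function.Injective (r x)) (x : V) (T : Finset V) :
    Set.InjOn (fun y => (T.filter fun z => r x z ≤ r x y).card) (T : Set V) := by
  have key : ∀ y1 ∈ T, ∀ y2 ∈ T, r x y1 ≤ r x y2 →
      (T.filter fun z => r x z ≤ r x y1).card = (T.filter fun z => r x z ≤ r x y2).card →
      y1 = y2 := by
    intro y1 h1 y2 h2 hle hcard
    have hsub : (T.filter fun z => r x z ≤ r x y1) ⊆ (T.filter fun z => r x z ≤ r x y2) := by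
      intro z hz
      simp only [Finset.mem_filter] at hz ⊢
      exact ⟨hz.1, hz.2.trans hle⟩
    have heq := Finset.eq_of_subset_of_card_le hsub hcard.ge
    have : y2 ∈ T.filter fun z => r x z ≤ r x y1 := by
      rw [heq]; simp [h2]
    have : r x y2 ≤ r x y1 := (Finset.mem_filter.mp this).2
    exact hrinj x (le_antisymm hle this)
  intro y1 h1 y2 h2 hcard
  rcases le_total (r x y1) (r x y2) with h | h
  · exact key y1 h1 y2 h2 h hcard
  · exact (key y2 h2 y1 h1 h hcard.symm).symm

lemma image_rankIn (hrinj : ∀ x : V, Function.Injective (r x)) (x : V) (T : Finset V) :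
    T.image (fun y => (T.filter fun z => r x z ≤ r x y).card) = Finset.Icc 1 T.card := by
  apply Finset.eq_of_subset_of_card_le
  · intro j hj
    simp only [Finset.mem_image] at hj
    obtain ⟨z, hz, hjz⟩ := hj
    have h1 : 1 ≤ (T.filter fun w => r x w ≤ r x z).card := by
      apply Finset.card_pos.mpr
      exact ⟨z, Finset.mem_filter.mpr ⟨hz, le_refl _⟩⟩
    have h2 : (T.filter fun w => r x w ≤ r x z).card ≤ T.card := Finset.card_filter_le _ _
    rw [Finset.mem_Icc, ← hjz]; exact ⟨h1, h2⟩
  · rw [Nat.card_Icc, Finset.card_image_of_injOn (rankIn_injOn r hrinj x T)]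
    omega

lemma card_nearestIn (hrinj : ∀ x : V, Function.Injective (r x)) (x : V) (T : Finset V) (s : ℕ) :
    (nearestIn r x T s).card = min s T.card := by
  have h1 : (nearestIn r x T s).card
      = ((nearestIn r x T s).image (fun y => (T.filter fun z => r x z ≤ r x y).card)).card := by
    rw [Finset.card_image_of_injOn ((rankIn_injOn r hrinj x T).mono (by
      intro z hz; exact Finset.filter_subset _ _ hz))]
  have h2 : (nearestIn r x T s).image (fun y => (T.filter fun z => r x z ≤ r x y).card)
      = (T.image (fun y => (T.filter fun z => r x z ≤ r x y).card)).filter (· ≤ s) := by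
    ext j
    simp only [nearest, nearestIn, Finset.mem_image, Finset.mem_filter, Finset.mem_univ, true_and]
    aesop
  rw [h1, h2, image_rankIn r hrinj x T]
  have : (Finset.Icc 1 T.card).filter (· ≤ s) = Finset.Icc 1 (min s T.card) := by
    ext j; simp only [Finset.mem_filter, Finset.mem_Icc]; omega
  rw [this, Nat.card_Icc]; omega

end Aux

lemma good_point_nearest_bound {V : Type*} [Fintype V] [DecidableEq V]
    (r : V → V → ℕ) (α ν : ℝ) (B Ci : Finset V)
    (hrinj : ∀ x : V, Function.Injective (r x))
    (hrlt : ∀ x y : V, r x y < Fintype.card V)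
    (hB : (B.card : ℝ) ≤ ν * (Fintype.card V))
    (t : ℕ) (ht : t = Ci.card)
    (x : V) (hx : IsGoodPoint r α B Ci x) :
    (t : ℝ) - (α + ν) * (Fintype.card V)
      ≤ (((nearest r x t) ∩ (Ci \ B)).card : ℝ) := by
  set n := Fintype.card V with hn
  set G := Ci \ B with hG
  set T := (Finset.univ : Finset V) \ B with hT
  set m := G.card with hm
  set Nx := nearestIn r x T m with hNx
  have hGT : G ⊆ T := Finset.sdiff_subset_sdiff (Finset.subset_univ _) Finset.Subset.rfl
  have hmT : m ≤ T.card := Finset.card_le_card hGT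
  have hNxcard : Nx.card = m := by
    rw [hNx, card_nearestIn r hrinj x T m]; omega
  have htn : t ≤ n := by rw [ht, hn, ← Finset.card_univ]; exact Finset.card_le_univ Ci
  have htmB : t ≤ m + B.card := by
    rw [ht, hm, hG]; exact Finset.card_le_card_sdiff_add_card
  -- Nx is contained in the (m + |B|) nearest neighbors of x
  have hNxsub : Nx ⊆ nearest r x (m + B.card) := by
    intro z hz
    rw [hNx, nearestIn, Finset.mem_filter] at hz
    obtain ⟨hzT, hfz⟩ := hz
    rw [nearest, Finset.mem_filter]
    refine ⟨Finset.mem_univ z, ?_⟩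
    have hsplit : r x z = (T.filter fun w => r x w < r x z).card
        + (B.filter fun w => r x w < r x z).card := by
      have huniv : T ∪ B = Finset.univ := Finset.sdiff_union_of_subset (Finset.subset_univ B)
      have hdisj : Disjoint (T.filter fun w => r x w < r x z)
          (B.filter fun w => r x w < r x z) :=
        Finset.disjoint_filter_filter Finset.sdiff_disjoint
      conv_lhs => rw [rank_eq_card r hrinj hrlt x z]
      rw [← huniv, Finset.filter_union, Finset.card_union_of_disjoint hdisj]
    have hTpart : (T.filter fun w => r x w < r x z).card
        < (T.filter fun w => r x w ≤ r x z).card := by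
      apply Finset.card_lt_card
      constructor
      · intro w hw
        rw [Finset.mem_filter] at hw ⊢
        exact ⟨hw.1, hw.2.le⟩
      · intro hcon
        have : z ∈ T.filter fun w => r x w < r x z :=
          hcon (Finset.mem_filter.mpr ⟨hzT, le_refl _⟩)
        exact absurd (Finset.mem_filter.mp this).2 (lt_irrefl _)
    have hBpart : (B.filter fun w => r x w < r x z).card ≤ B.card :=
      Finset.card_filter_le _ _
    omega
  have hsubt : nearest r x t ⊆ nearest r x (m + B.card) := by
    intro w hw
    rw [nearest, Finset.mem_filter] at hw ⊢
    exact ⟨hw.1, hw.2.trans_le htmB⟩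
  have hcard_big : (nearest r x (m + B.card)).card ≤ m + B.card := by
    rw [card_nearest r hrinj hrlt x (m + B.card)]; omega
  have hNt : (nearest r x t).card = t := by
    rw [card_nearest r hrinj hrlt x t]; omega
  have hunion : ((Nx ∩ G) ∪ nearest r x t).card ≤ m + B.card := by
    refine le_trans (Finset.card_le_card ?_) hcard_big
    exact Finset.union_subset ((Finset.inter_subset_left).trans hNxsub) hsubt
  have hsum : ((Nx ∩ G) ∪ nearest r x t).card + ((Nx ∩ G) ∩ nearest r x t).card
      = (Nx ∩ G).card + (nearest r x t).card :=
    Finset.card_union_add_card_inter _ _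
  have hinterG : (Nx ∩ G).card + (Nx \ G).card = Nx.card :=
    Finset.card_inter_add_card_sdiff Nx G
  have hgood : ((Nx \ G).card : ℝ) ≤ α * n := hx.2
  have hfinal_sub : (Nx ∩ G) ∩ nearest r x t ⊆ (nearest r x t) ∩ G := by
    intro w hw
    rw [Finset.mem_inter] at hw ⊢
    exact ⟨hw.2, (Finset.mem_inter.mp hw.1).2⟩
  have hfc : ((Nx ∩ G) ∩ nearest r x t).card ≤ ((nearest r x t) ∩ G).card :=
    Finset.card_le_card hfinal_sub
  -- assemble over ℝ
  have h1 : ((Nx ∩ G).card : ℝ) + t ≤ m + B.card + (((nearest r x t) ∩ G).card : ℝ) := by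
    have := hsum
    rw [hNt] at this
    have hnat : (Nx ∩ G).card + t ≤ m + B.card + ((nearest r x t) ∩ G).card := by omega
    exact_mod_cast hnat
  have h2 : (m : ℝ) = ((Nx ∩ G).card : ℝ) + ((Nx \ G).card : ℝ) := by
    rw [← hNxcard]; exact_mod_cast hinterG.symm
  linarith

theorem weak_good_points_same_cluster_share_neighbors
    {V : Type*} [Fintype V] [DecidableEq V] {k : ℕ}
    (r : V → V → ℕ) (C : Fin k → Finset V) (α ν : ℝ) (B : Finset V)
    (hn : 0 < Fintype.card V)
    (hα : 0 ≤ α) (hν : 0 ≤ ν)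
    (hrinj : ∀ x : V, Function.Injective (r x))
    (hrlt : ∀ x y : V, r x y < Fintype.card V)
    (hdis : ∀ i j : Fin k, i ≠ j → Disjoint (C i) (C j))
    (hcov : ∀ x : V, ∃ i : Fin k, x ∈ C i)
    (hB : (B.card : ℝ) ≤ ν * (Fintype.card V))
    (i : Fin k) (t : ℕ) (ht : t = (C i).card)
    (x : V) (hx : IsGoodPoint r α B (C i) x)
    (y : V) (hy : IsGoodPoint r α B (C i) y) :
    (t : ℝ) - 2 * (α + ν) * (Fintype.card V)
        ≤ (((nearest r x t) ∩ (nearest r y t)).card : ℝ) := by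
  set n := Fintype.card V with hn'
  set G := C i \ B with hG
  have hbx := good_point_nearest_bound r α ν B (C i) hrinj hrlt hB t ht x hx
  have hby := good_point_nearest_bound r α ν B (C i) hrinj hrlt hB t ht y hy
  set Ax := (nearest r x t) ∩ G with hAx
  set Ay := (nearest r y t) ∩ G with hAy
  have hmt : G.card ≤ t := by rw [ht, hG]; exact Finset.card_le_card Finset.sdiff_subset
  have hU : (Ax ∪ Ay).card ≤ t := by
    refine le_trans (Finset.card_le_card ?_) hmt
    exact Finset.union_subset Finset.inter_subset_right Finset.inter_subset_right
  have hsum : (Ax ∪ Ay).card + (Ax ∩ Ay).card = Ax.card + Ay.card :=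
    Finset.card_union_add_card_inter _ _
  have hnat : Ax.card + Ay.card ≤ t + (Ax ∩ Ay).card := by omega
  have hsub : Ax ∩ Ay ⊆ (nearest r x t) ∩ (nearest r y t) := by
    intro w hw
    rw [Finset.mem_inter] at hw ⊢
    exact ⟨(Finset.mem_inter.mp hw.1).1, (Finset.mem_inter.mp hw.2).1⟩
  have hc : ((Ax ∩ Ay).card : ℝ) ≤ (((nearest r x t) ∩ (nearest r y t)).card : ℝ) := by
    exact_mod_cast Finset.card_le_card hsub
  have hnatR : (Ax.card : ℝ) + Ay.card ≤ t + ((Ax ∩ Ay).card : ℝ) := by exact_mod_cast hnat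
  linarith
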